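/- Let x_0 = Σ_{r<R} φ_r v_r where the v_r are eigenvectors of A with distinct eigenvalues λ_r, all φ_r ≠ 0, and the v_r are linearly independent. If m ≥ R, then the snapshot matrix X = [x_0, A x_0, ..., A^{m−1} x_0] has rank exactly R. -/

import Mathlib

/-! Writing `x₀ = Σ φ_r v_r`, the `k`-th snapshot is `Σ_r φ_r λ_r^k v_r`, so `X = V C` with
`V = [v_0 ⋯ v_{R-1}]` and `C_{rk} = φ_r λ_r^k`. Since the columns of `V` are independent,
`rank X = rank C`; and the first `R` columns of `C` form `diag(φ) · Vandermonde(λ)`, which is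
invertible because the `φ_r` are nonzero and the `λ_r` distinct, so `rank C = R`. -/

open Matrix

namespace Matrix

variable {R : Type*} {l m n : Type*}

lemma pow_mulVec_of_mulVec_eq_smul [CommSemiring R] [Fintype n] [DecidableEq n]
    {A : Matrix n n R} {v : n → R} {c : R} (h : A *ᵥ v = c • v) (k : ℕ) :
    (A ^ k) *ᵥ v = c ^ k • v := by
  induction k with
  | zero => simp
  | succ k ih => rw [pow_succ, ← mulVec_mulVec, h, mulVec_smul, ih, smul_smul, pow_succ']

lemma pow_mulVec_sum_smul_of_mulVec_eq_smul [CommSemiring R] [Fintype n] [DecidableEq n]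
    [Fintype m] {A : Matrix n n R} {v : m → n → R} {lam : m → R}
    (heig : ∀ r, A *ᵥ v r = lam r • v r) (φ : m → R) (k : ℕ) :
    (A ^ k) *ᵥ ∑ r, φ r • v r = ∑ r, (φ r * lam r ^ k) • v r := by
  simp only [mulVec_sum, mulVec_smul, pow_mulVec_of_mulVec_eq_smul (heig _), smul_smul]

lemma rank_mul_eq_right_of_mulVec_injective [CommRing R] [Fintype m] [Fintype n]
    {A : Matrix l m R} (hA : Function.Injective A.mulVec) (B : Matrix m n R) :
    (A * B).rank = B.rank := by
  rw [rank, rank, mulVecLin_mul, LinearMap.range_comp,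
    ← (Submodule.equivMapOfInjective A.mulVecLin hA _).finrank_eq]

lemma rank_eq_card_height_of_det_submatrix_ne_zero [CommRing R] [IsDomain R]
    [Fintype m] [DecidableEq m] [Fintype n] {A : Matrix m n R} (c : m → n)
    (hc : (A.submatrix id c).det ≠ 0) : A.rank = Fintype.card m :=
  le_antisymm (rank_le_card_height A) <|
    (rank_of_det_ne_zero hc).symm.le.trans (rank_submatrix_le A id c)

lemma rank_scaled_vandermonde_of_le [CommRing R] [IsDomain R] {r k : ℕ} (hrk : r ≤ k)
    {lam : Fin r → R} (hlam : Function.Injective lam) {φ : Fin r → R} (hφ : ∀ i, φ i ≠ 0) :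
    (of fun (i : Fin r) (j : Fin k) => φ i * lam i ^ (j : ℕ)).rank = r := by
  have hsub : (of fun (i : Fin r) (j : Fin k) => φ i * lam i ^ (j : ℕ)).submatrix id
      (Fin.castLE hrk) = diagonal φ * vandermonde lam := by
    ext i j
    simp [diagonal_mul, vandermonde_apply]
  rw [rank_eq_card_height_of_det_submatrix_ne_zero (Fin.castLE hrk) ?_, Fintype.card_fin]
  rw [hsub, det_mul, det_diagonal]
  exact mul_ne_zero (Finset.prod_ne_zero_iff.mpr fun i _ => hφ i)
    (det_vandermonde_ne_zero_iff.mpr hlam)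

end Matrix

theorem snapshot_matrix_rank_general {n m R : ℕ}
    (A : Matrix (Fin n) (Fin n) ℂ)
    (v : Fin R → Fin n → ℂ) (lam : Fin R → ℂ) (φ : Fin R → ℂ)
    (heig : ∀ r, A.mulVec (v r) = lam r • v r)
    (hdist : Function.Injective lam)
    (hφ : ∀ r, φ r ≠ 0)
    (hv : LinearIndependent ℂ v)
    (hm : R ≤ m)
    (x0 : Fin n → ℂ)
    (hx0 : x0 = ∑ r, φ r • v r)
    (X : Matrix (Fin n) (Fin m) ℂ)
    (hX : ∀ k : Fin m, (fun i => X i k) = (A ^ (k : ℕ)).mulVec x0) :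
    X.rank = R := by
  have hX_eq : X = (of v)ᵀ * of fun r (k : Fin m) => φ r * lam r ^ (k : ℕ) := by
    ext i k
    rw [show X i k = _ from congrFun (hX k) i, hx0,
      pow_mulVec_sum_smul_of_mulVec_eq_smul heig, mul_apply, Finset.sum_apply]
    simp only [Pi.smul_apply, smul_eq_mul, transpose_apply, of_apply, mul_comm]
  rw [hX_eq, rank_mul_eq_right_of_mulVec_injective (mulVec_injective_iff (M := (of v)ᵀ).mpr hv),
    rank_scaled_vandermonde_of_le hm hdist hφ]

/-- If `x₀ = Σ_r φ_r v_r` with `v_r` linearly independent eigenvectors of `A` whose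
eigenvalues `λ_r` are pairwise distinct and nonzero, all `φ_r ≠ 0`, and `m ≥ R`, then
the snapshot matrix `X = [x₀, A x₀, ..., A^{m-1} x₀]` has rank exactly `R`. -/
theorem snapshot_matrix_rank {n m R : ℕ}
    (A : Matrix (Fin n) (Fin n) ℂ)
    (v : Fin R → Fin n → ℂ) (lam : Fin R → ℂ) (φ : Fin R → ℂ)
    (heig : ∀ r, A.mulVec (v r) = lam r • v r)
    (hdist : Function.Injective lam)
    (hlam0 : ∀ r, lam r ≠ 0)
    (hφ : ∀ r, φ r ≠ 0)
    (hv : LinearIndependent ℂ v)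
    (hm : R ≤ m)
    (x0 : Fin n → ℂ)
    (hx0 : x0 = ∑ r, φ r • v r)
    (X : Matrix (Fin n) (Fin m) ℂ)
    (hX : ∀ k : Fin m, (fun i => X i k) = (A ^ (k : ℕ)).mulVec x0) :
    X.rank = R :=
  snapshot_matrix_rank_general A v lam φ heig hdist hφ hv hm x0 hx0 X hX
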